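/- arXiv:1512.00482 — 3 statements merged into one kernel-verified Lean document; each statement's English description precedes it below -/
import Mathlib

section
/- For all languages M₁, M₂ ⊆ Σ*, the iterated shuffle of their union equals the shuffle of their iterated shuffles: (M₁ ∪ M₂)^{⧢,*} = M₁^{⧢,*} ⧢ M₂^{⧢,*}. -/
variable {α : Type*}

/-- `IsShuffle u v w` means `w` is an interleaving of `u` and `v`. -/
inductive IsShuffle : List α → List α → List α → Prop
  | nil : IsShuffle [] [] []
  | left {u v w : List α} (a : α) : IsShuffle u v w → IsShuffle (a :: u) v (a :: w)
  | right {u v w : List α} (b : α) : IsShuffle u v w → IsShuffle u (b :: v) (b :: w)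

/-- The shuffle `u ⧢ v` of two words, as a set of words. -/
def wordShuffle (u v : List α) : Set (List α) := {w | IsShuffle u v w}

/-- The shuffle of two languages. -/
def lshuffle (L₁ L₂ : Set (List α)) : Set (List α) :=
  {w | ∃ u ∈ L₁, ∃ v ∈ L₂, IsShuffle u v w}

/-- n-fold shuffle power. -/
def shufflePow (L : Set (List α)) : ℕ → Set (List α)
  | 0 => {[]}
  | n + 1 => lshuffle (shufflePow L n) L

/-- Iterated shuffle `L^{⧢,*}`. -/
def shuffleStar (L : Set (List α)) : Set (List α) := ⋃ n, shufflePow L n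

/-- The set of permutations of a word. -/
def permW (w : List α) : Set (List α) := {v | v.Perm w}

/-- Permutation closure of a language. -/
def permL (L : Set (List α)) : Set (List α) := {v | ∃ w ∈ L, v.Perm w}

/-- Concatenation of languages. -/
def catL (L₁ L₂ : Set (List α)) : Set (List α) := {w | ∃ u ∈ L₁, ∃ v ∈ L₂, w = u ++ v}

/-- n-fold concatenation power. -/
def catPow (L : Set (List α)) : ℕ → Set (List α)
  | 0 => {[]}
  | n + 1 => catL (catPow L n) L

/-- Kleene star. -/
def kstar (L : Set (List α)) : Set (List α) := ⋃ n, catPow L n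

/-- Parikh mapping: counts occurrences of each letter. -/
def parikh [DecidableEq α] (w : List α) : α → ℕ := fun a => w.count a

lemma IsShuffle.comm {u v w : List α} (h : IsShuffle u v w) : IsShuffle v u w := by
  induction h with
  | nil => exact .nil
  | left a _ ih => exact .right a ih
  | right b _ ih => exact .left b ih

lemma IsShuffle.nil_right' {u v w : List α} (h : IsShuffle u v w) (hv : v = []) : w = u := by
  induction h with
  | nil => rfl
  | left a _ ih => simp [ih hv]
  | right b _ _ => simp at hv

lemma IsShuffle.nil_right {u w : List α} (h : IsShuffle u [] w) : w = u := h.nil_right' rfl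

lemma isShuffle_nil_left (u : List α) : IsShuffle [] u u := by
  induction u with
  | nil => exact .nil
  | cons a t ih => exact .right a ih

lemma IsShuffle.assoc {u v x t w : List α} (h1 : IsShuffle u v x) (h2 : IsShuffle x t w) :
    ∃ y, IsShuffle v t y ∧ IsShuffle u y w := by
  induction h2 generalizing u v with
  | nil =>
    cases h1
    exact ⟨[], .nil, .nil⟩
  | left a hx ih =>
    cases h1 with
    | left _ h1' =>
      obtain ⟨y, hy1, hy2⟩ := ih h1'
      exact ⟨y, hy1, .left a hy2⟩
    | right _ h1' =>
      obtain ⟨y, hy1, hy2⟩ := ih h1'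
      exact ⟨a :: y, .left a hy1, .right a hy2⟩
  | right b hx ih =>
    obtain ⟨y, hy1, hy2⟩ := ih h1
    exact ⟨b :: y, .right b hy1, .right b hy2⟩

lemma shufflePow_mono {A B : Set (List α)} (h : A ⊆ B) (n : ℕ) :
    shufflePow A n ⊆ shufflePow B n := by
  induction n with
  | zero => exact le_refl _
  | succ n ih =>
    rintro w ⟨u, hu, v, hv, hs⟩
    exact ⟨u, ih hu, v, h hv, hs⟩

lemma shufflePow_union_subset (M₁ M₂ : Set (List α)) (n : ℕ) :
    shufflePow (M₁ ∪ M₂) n ⊆ lshuffle (shuffleStar M₁) (shuffleStar M₂) := by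
  induction n with
  | zero =>
    rintro w rfl
    exact ⟨[], Set.mem_iUnion.2 ⟨0, rfl⟩, [], Set.mem_iUnion.2 ⟨0, rfl⟩, .nil⟩
  | succ n ih =>
    rintro w ⟨u, hu, v, hv, hs⟩
    obtain ⟨a, ha, b, hb, hab⟩ := ih hu
    obtain ⟨i, hi⟩ := Set.mem_iUnion.1 ha
    obtain ⟨j, hj⟩ := Set.mem_iUnion.1 hb
    cases hv with
    | inl hv1 =>
      obtain ⟨y, hy1, hy2⟩ := hab.comm.assoc hs
      -- hy1 : IsShuffle a v y, hy2 : IsShuffle b y w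
      refine ⟨y, Set.mem_iUnion.2 ⟨i + 1, ⟨a, hi, v, hv1, hy1⟩⟩, b,
        Set.mem_iUnion.2 ⟨j, hj⟩, hy2.comm⟩
    | inr hv2 =>
      obtain ⟨y, hy1, hy2⟩ := hab.assoc hs
      exact ⟨a, Set.mem_iUnion.2 ⟨i, hi⟩, y,
        Set.mem_iUnion.2 ⟨j + 1, ⟨b, hj, v, hv2, hy1⟩⟩, hy2⟩

lemma lshuffle_pow_subset (M₁ M₂ : Set (List α)) (i j : ℕ) :
    lshuffle (shufflePow M₁ i) (shufflePow M₂ j) ⊆ shufflePow (M₁ ∪ M₂) (i + j) := by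
  induction j with
  | zero =>
    rintro w ⟨u, hu, v, rfl, hs⟩
    rw [hs.nil_right]
    exact shufflePow_mono Set.subset_union_left i hu
  | succ j ih =>
    rintro w ⟨u, hu, v, ⟨b, hb, c, hc, hbc⟩, hs⟩
    obtain ⟨y, hy1, hy2⟩ := hbc.comm.assoc hs.comm
    -- hy1 : IsShuffle b u y, hy2 : IsShuffle c y w
    have hy : y ∈ shufflePow (M₁ ∪ M₂) (i + j) := ih ⟨u, hu, b, hb, hy1.comm⟩
    exact ⟨y, hy, c, Or.inr hc, hy2.comm⟩

theorem stmt4 (M₁ M₂ : Set (List α)) :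
    shuffleStar (M₁ ∪ M₂) = lshuffle (shuffleStar M₁) (shuffleStar M₂) := by
  ext w
  constructor
  · intro hw
    obtain ⟨n, hn⟩ := Set.mem_iUnion.1 hw
    exact shufflePow_union_subset M₁ M₂ n hn
  · rintro ⟨u, hu, v, hv, hs⟩
    obtain ⟨i, hi⟩ := Set.mem_iUnion.1 hu
    obtain ⟨j, hj⟩ := Set.mem_iUnion.1 hv
    exact Set.mem_iUnion.2 ⟨i + j, lshuffle_pow_subset M₁ M₂ i j ⟨u, hi, v, hj, hs⟩⟩
end

section
/- For all languages L₁, L₂ ⊆ Σ*: perm(L₁) ⧢ perm(L₂) = perm(L₁ ⧢ L₂) = perm(L₁ · L₂). -/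
variable {α : Type*}

lemma IsShuffle.perm_append {u v w : List α} (h : IsShuffle u v w) : w.Perm (u ++ v) := by
  induction h with
  | nil => simp
  | left a _ ih => simpa using ih.cons a
  | right b h ih =>
    exact (ih.cons b).trans (List.Perm.symm (List.perm_middle))

lemma isShuffle_append (u v : List α) : IsShuffle u v (u ++ v) := by
  induction u with
  | nil =>
    induction v with
    | nil => exact IsShuffle.nil
    | cons b t ih => exact IsShuffle.right b ih
  | cons a t ih => exact IsShuffle.left a ih

lemma exists_shuffle_of_perm [DecidableEq α] : ∀ (w u v : List α), w.Perm (u ++ v) →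
    ∃ u' v', u'.Perm u ∧ v'.Perm v ∧ IsShuffle u' v' w := by
  intro w
  induction w with
  | nil =>
    intro u v h
    have := h.symm.eq_nil
    rcases List.append_eq_nil_iff.mp this with ⟨hu, hv⟩
    exact ⟨[], [], by simp [hu], by simp [hv], IsShuffle.nil⟩
  | cons a w ih =>
    intro u v h
    have ha : a ∈ u ++ v := h.mem_iff.mp (by simp)
    rcases List.mem_append.mp ha with hau | hav
    · have h2 : w.Perm (u.erase a ++ v) := by
        have := (List.perm_cons a).mp
          (h.trans (((List.perm_cons_erase hau).append_right v)))
        exact this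
      obtain ⟨u', v', hu', hv', hs⟩ := ih _ _ h2
      exact ⟨a :: u', v', (hu'.cons a).trans (List.perm_cons_erase hau).symm, hv',
        IsShuffle.left a hs⟩
    · have h2 : w.Perm (u ++ v.erase a) := by
        have hp : (u ++ v).Perm (a :: (u ++ v.erase a)) :=
          ((List.perm_cons_erase hav).append_left u).trans List.perm_middle
        exact (List.perm_cons a).mp (h.trans hp)
      obtain ⟨u', v', hu', hv', hs⟩ := ih _ _ h2
      exact ⟨u', a :: v', hu', (hv'.cons a).trans (List.perm_cons_erase hav).symm,
        IsShuffle.right a hs⟩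

theorem stmt13 (L₁ L₂ : Set (List α)) :
    lshuffle (permL L₁) (permL L₂) = permL (lshuffle L₁ L₂) ∧
    permL (lshuffle L₁ L₂) = permL (catL L₁ L₂) := by
  constructor
  · ext w
    constructor
    · rintro ⟨u', ⟨u, hu, huu⟩, v', ⟨v, hv, hvv⟩, hs⟩
      exact ⟨u ++ v, ⟨u, hu, v, hv, isShuffle_append u v⟩,
        hs.perm_append.trans (huu.append hvv)⟩
    · rintro ⟨w', ⟨u, hu, v, hv, hs⟩, hw⟩
      have hperm : w.Perm (u ++ v) := hw.trans hs.perm_append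
      haveI := Classical.decEq α
      obtain ⟨u', v', hu', hv', hs'⟩ := exists_shuffle_of_perm w u v hperm
      exact ⟨u', ⟨u, hu, hu'⟩, v', ⟨v, hv, hv'⟩, hs'⟩
  · ext w
    constructor
    · rintro ⟨w', ⟨u, hu, v, hv, hs⟩, hw⟩
      exact ⟨u ++ v, ⟨u, hu, v, hv, rfl⟩, hw.trans hs.perm_append⟩
    · rintro ⟨w', ⟨u, hu, v, hv, rfl⟩, hw⟩
      exact ⟨u ++ v, ⟨u, hu, v, hv, isShuffle_append u v⟩, hw⟩
end

section
/- perm : 2^{Σ*} → 2^{Σ*} is a semiring morphism from the concatenation semiring (2^{Σ*}, ∪, ·, ∅, {ε}) to the shuffle semiring (2^{Σ*}, ∪, ⧢, ∅, {ε}); in particular perm(∅) = ∅, perm({ε}) = {ε}, perm(L₁ ∪ L₂) = perm(L₁) ∪ perm(L₂), and perm(L₁ · L₂) = perm(L₁) ⧢ perm(L₂). -/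
variable {α : Type*}

lemma exists_shuffle_of_perm_append :
    ∀ {w u v : List α}, w.Perm (u ++ v) →
      ∃ u' v', u'.Perm u ∧ v'.Perm v ∧ IsShuffle u' v' w := by
  haveI := Classical.decEq α
  intro w
  induction w with
  | nil =>
      intro u v h
      have := List.Perm.nil_eq h
      rcases List.append_eq_nil_iff.mp this.symm with ⟨hu, hv⟩
      subst hu; subst hv
      exact ⟨[], [], .rfl, .rfl, .nil⟩
  | cons a w ih =>
      intro u v h
      have ha : a ∈ u ++ v := h.mem_iff.mp (by simp)
      rcases List.mem_append.mp ha with hu | hv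
      · have hp : w.Perm (u.erase a ++ v) := by
          have h2 : (a :: w).Perm (a :: (u.erase a ++ v)) :=
            h.trans ((List.perm_cons_erase hu).append_right v)
          exact (List.perm_cons a).mp h2
        obtain ⟨u', v', hu', hv', hs⟩ := ih hp
        exact ⟨a :: u', v', (hu'.cons a).trans (List.perm_cons_erase hu).symm, hv',
          .left a hs⟩
      · have hp : w.Perm (u ++ v.erase a) := by
          have h2 : (a :: w).Perm (a :: (u ++ v.erase a)) :=
            h.trans (((List.perm_cons_erase hv).append_left u).trans List.perm_middle)
          exact (List.perm_cons a).mp h2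
        obtain ⟨u', v', hu', hv', hs⟩ := ih hp
        exact ⟨u', a :: v', hu', (hv'.cons a).trans (List.perm_cons_erase hv).symm,
          .right a hs⟩

theorem stmt15 :
    permL (∅ : Set (List α)) = ∅ ∧
    permL ({[]} : Set (List α)) = {[]} ∧
    (∀ L₁ L₂ : Set (List α), permL (L₁ ∪ L₂) = permL L₁ ∪ permL L₂) ∧
    (∀ L₁ L₂ : Set (List α), permL (catL L₁ L₂) = lshuffle (permL L₁) (permL L₂)) := by
  refine ⟨?_, ?_, ?_, ?_⟩
  · ext w; simp [permL]
  · ext w; simp [permL]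
  · intro L₁ L₂; ext w
    constructor
    · rintro ⟨u, hu | hu, hp⟩
      · exact Or.inl ⟨u, hu, hp⟩
      · exact Or.inr ⟨u, hu, hp⟩
    · rintro (⟨u, hu, hp⟩ | ⟨u, hu, hp⟩)
      · exact ⟨u, Or.inl hu, hp⟩
      · exact ⟨u, Or.inr hu, hp⟩
  · intro L₁ L₂; ext w
    constructor
    · rintro ⟨x, ⟨u, hu, v, hv, rfl⟩, hp⟩
      obtain ⟨u', v', hu', hv', hs⟩ := exists_shuffle_of_perm_append hp
      exact ⟨u', ⟨u, hu, hu'⟩, v', ⟨v, hv, hv'⟩, hs⟩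
    · rintro ⟨u', ⟨u, hu, hu'⟩, v', ⟨v, hv, hv'⟩, hs⟩
      exact ⟨u ++ v, ⟨u, hu, v, hv, rfl⟩, hs.perm_append.trans (hu'.append hv')⟩
end
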